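/- Let V, W, Z be real Hilbert spaces, B : V → W and C : W → Z continuous linear maps, B* the Hilbert-adjoint of B, τ > 0, and L_τ : V × W → V × W × Z the continuous linear map L_τ(u, w) = (B* w + (2/τ) u, w − B u, C w). Let 𝒱_h be a subspace of V × W. Suppose: u_n^h, u_n ∈ V; (u^h, V^h) ∈ 𝒱_h satisfies ⟨L_τ(u^h, V^h) − ((2/τ) u_n^h, 0, 0), L_τ φ⟩ = 0 for all φ ∈ 𝒱_h; and (u_half, V_half) ∈ V × W satisfies L_τ(u_half, V_half) = ((2/τ) u_n, 0, 0) exactly. Set u_{n+1}^h = 2 u^h − u_n^h and E = (‖u_{n+1}^h‖² − ‖u_n^h‖²)/(2τ) + ‖V^h‖². Then for every φ ∈ 𝒱_h, |E| ≤ ( ‖L_τ‖ · ‖(u^h, V^h) − (u_half, V_half)‖ + (2/τ)·‖u_n^h − u_n‖ ) · ‖(u^h, V^h, 0) − L_τ φ‖, where ‖L_τ‖ is the operator norm. Consequently the same bound holds with the last factor replaced by the infimum of ‖(u^h, V^h, 0) − L_τ φ‖ over φ ∈ 𝒱_h. (This is the abstract form of Theorem 1, bounding the deviation of the FOSLS discretization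 from the exact discrete energy law.) -/

import Mathlib

open RealInnerProductSpace

/-!
Testing the Galerkin residual `g = L_τ(u^h, V^h) - ((2/τ) u_n^h, 0, 0)` against `(u^h, V^h, 0)`
gives exactly `E`: the terms `⟨B* V^h, u^h⟩` and `⟨V^h, B u^h⟩` cancel, and
`‖2u^h - u_n^h‖² - ‖u_n^h‖² = 4⟨u^h - u_n^h, u^h⟩`. Galerkin orthogonality lets one subtract any
`L_τ φ` with `φ ∈ 𝒱_h` from the test vector, so Cauchy–Schwarz bounds `|E|` by
`‖g‖ ‖(u^h, V^h, 0) - L_τ φ‖`; since the exact half step satisfies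
`L_τ(u_half, V_half) = ((2/τ) u_n, 0, 0)`, the residual `g` is at most
`‖L_τ‖ ‖(u^h, V^h) - (u_half, V_half)‖ + (2/τ) ‖u_n^h - u_n‖`.
-/

section Galerkin

variable {E F : Type*} [NormedAddCommGroup E] [InnerProductSpace ℝ E]
  [NormedAddCommGroup F] [InnerProductSpace ℝ F]

theorem abs_inner_le_norm_mul_norm_sub_of_forall_inner_eq_zero (L : E →L[ℝ] F)
    (S : Submodule ℝ E) {g : F} (hg : ∀ φ ∈ S, ⟪g, L φ⟫ = 0) (y : F) {φ : E} (hφ : φ ∈ S) :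
    |⟪g, y⟫| ≤ ‖g‖ * ‖y - L φ‖ := by
  rw [← sub_zero ⟪g, y⟫, ← hg φ hφ, ← inner_sub_right]
  exact abs_real_inner_le_norm _ _

theorem norm_apply_sub_le_of_apply_eq (L : E →L[ℝ] F) {x x' : E} {r r' : F} (h : L x' = r') :
    ‖L x - r‖ ≤ ‖L‖ * ‖x - x'‖ + ‖r' - r‖ := by
  calc ‖L x - r‖ = ‖L (x - x') + (r' - r)‖ := by rw [map_sub, h]; abel_nf
    _ ≤ ‖L‖ * ‖x - x'‖ + ‖r' - r‖ := (norm_add_le _ _).trans (add_le_add_left (L.le_opNorm _) _)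

end Galerkin

theorem le_mul_iInf_of_forall_le {ι : Type*} [Nonempty ι] {a c : ℝ} {f : ι → ℝ} (hc : 0 ≤ c)
    (h : ∀ i, a ≤ c * f i) : a ≤ c * ⨅ i, f i := by
  rw [Real.mul_iInf_of_nonneg hc]
  exact le_ciInf h

theorem norm_two_smul_sub_sq_sub_norm_sq {V : Type*} [NormedAddCommGroup V]
    [InnerProductSpace ℝ V] (u v : V) : ‖(2 : ℝ) • u - v‖ ^ 2 - ‖v‖ ^ 2 = 4 * ⟪u - v, u⟫ := by
  rw [norm_sub_sq_real, norm_smul, inner_smul_left, inner_sub_left, real_inner_self_eq_norm_sq,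
    real_inner_comm]
  norm_num
  ring

theorem inner_adjoint_add_sub_toLp {V W Z : Type*} [NormedAddCommGroup V]
    [InnerProductSpace ℝ V] [CompleteSpace V] [NormedAddCommGroup W] [InnerProductSpace ℝ W]
    [CompleteSpace W] [NormedAddCommGroup Z] [InnerProductSpace ℝ Z]
    (B : V →L[ℝ] W) (C : W →L[ℝ] Z) (a u : V) (w : W) :
    ⟪WithLp.toLp 2 (ContinuousLinearMap.adjoint B w + a, WithLp.toLp 2 (w - B u, C w)),
      WithLp.toLp 2 (u, WithLp.toLp 2 (w, (0 : Z)))⟫ = ⟪a, u⟫ + ‖w‖ ^ 2 := by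
  simp only [WithLp.prod_inner_apply, inner_add_left, inner_sub_left, inner_zero_right,
    ContinuousLinearMap.adjoint_inner_left, real_inner_self_eq_norm_sq, real_inner_comm w (B u)]
  ring

theorem fosls_energy_law_bound_general
    {V W Z : Type*} [NormedAddCommGroup V] [InnerProductSpace ℝ V] [CompleteSpace V]
    [NormedAddCommGroup W] [InnerProductSpace ℝ W] [CompleteSpace W]
    [NormedAddCommGroup Z] [InnerProductSpace ℝ Z]
    (B : V →L[ℝ] W) (C : W →L[ℝ] Z) (τ : ℝ) (hτ : 0 < τ)
    (Lτ : WithLp 2 (V × W) →L[ℝ] WithLp 2 (V × WithLp 2 (W × Z)))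
    (hLτ : ∀ (u : V) (w : W),
      Lτ ((WithLp.equiv 2 (V × W)).symm (u, w)) =
        (WithLp.equiv 2 (V × WithLp 2 (W × Z))).symm
          (ContinuousLinearMap.adjoint B w + (2 / τ) • u,
            (WithLp.equiv 2 (W × Z)).symm (w - B u, C w)))
    (𝒱h : Submodule ℝ (WithLp 2 (V × W)))
    (unh un uh : V) (Vh : W)
    (hFOSLS : ∀ φ ∈ 𝒱h,
      ⟪Lτ ((WithLp.equiv 2 (V × W)).symm (uh, Vh)) -
          (WithLp.equiv 2 (V × WithLp 2 (W × Z))).symm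
            ((2 / τ) • unh, (WithLp.equiv 2 (W × Z)).symm (0, 0)),
        Lτ φ⟫ = 0)
    (uhalf : V) (Vhalf : W)
    (hexact : Lτ ((WithLp.equiv 2 (V × W)).symm (uhalf, Vhalf)) =
        (WithLp.equiv 2 (V × WithLp 2 (W × Z))).symm
          ((2 / τ) • un, (WithLp.equiv 2 (W × Z)).symm (0, 0)))
    (unp1 : V) (hnext : unp1 = (2 : ℝ) • uh - unh)
    (E : ℝ) (hE : E = (‖unp1‖ ^ 2 - ‖unh‖ ^ 2) / (2 * τ) + ‖Vh‖ ^ 2) :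
    (∀ φ ∈ 𝒱h,
      |E| ≤ (‖Lτ‖ * ‖(WithLp.equiv 2 (V × W)).symm (uh, Vh) -
                      (WithLp.equiv 2 (V × W)).symm (uhalf, Vhalf)‖ +
              (2 / τ) * ‖unh - un‖) *
            ‖(WithLp.equiv 2 (V × WithLp 2 (W × Z))).symm
                (uh, (WithLp.equiv 2 (W × Z)).symm (Vh, 0)) - Lτ φ‖) ∧
    |E| ≤ (‖Lτ‖ * ‖(WithLp.equiv 2 (V × W)).symm (uh, Vh) -
                    (WithLp.equiv 2 (V × W)).symm (uhalf, Vhalf)‖ +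
            (2 / τ) * ‖unh - un‖) *
          ⨅ φ : 𝒱h,
            ‖(WithLp.equiv 2 (V × WithLp 2 (W × Z))).symm
                (uh, (WithLp.equiv 2 (W × Z)).symm (Vh, 0)) - Lτ (φ : WithLp 2 (V × W))‖ := by
  simp only [WithLp.equiv_symm_apply, Prod.mk_zero_zero, WithLp.toLp_zero] at hLτ hFOSLS hexact ⊢
  set g := Lτ (WithLp.toLp 2 (uh, Vh)) - WithLp.toLp 2 ((2 / τ) • unh, 0) with hg_def
  set c := ‖Lτ‖ * ‖WithLp.toLp 2 (uh, Vh) - WithLp.toLp 2 (uhalf, Vhalf)‖ +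
    (2 / τ) * ‖unh - un‖ with hc_def
  have hEg : E = ⟪g, WithLp.toLp 2 (uh, WithLp.toLp 2 (Vh, (0 : Z)))⟫ := by
    rw [hE, hnext, norm_two_smul_sub_sq_sub_norm_sq, hg_def, hLτ, ← WithLp.toLp_sub,
      Prod.mk_sub_mk, sub_zero, add_sub_assoc, ← smul_sub, inner_adjoint_add_sub_toLp,
      real_inner_smul_left]
    field_simp
    ring
  have hg : ‖g‖ ≤ c := by
    refine (norm_apply_sub_le_of_apply_eq Lτ hexact).trans_eq ?_
    congr 1
    rw [← WithLp.toLp_sub, Prod.mk_sub_mk, sub_zero, WithLp.norm_toLp_fst, ← smul_sub,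
      norm_smul, Real.norm_of_nonneg (by positivity), norm_sub_rev]
  have hpt : ∀ φ ∈ 𝒱h, |E| ≤ c * ‖WithLp.toLp 2 (uh, WithLp.toLp 2 (Vh, (0 : Z))) - Lτ φ‖ :=
    fun φ hφ => hEg ▸
      (abs_inner_le_norm_mul_norm_sub_of_forall_inner_eq_zero Lτ 𝒱h hFOSLS _ hφ).trans
        (mul_le_mul_of_nonneg_right hg (norm_nonneg _))
  exact ⟨hpt, le_mul_iInf_of_forall_le (by positivity) fun φ => hpt φ φ.2⟩

/-- Abstract form of Theorem 1: the deviation of the FOSLS discretization from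
the exact discrete energy law is bounded by the product of a consistency factor
and the distance of `(u^h, V^h, 0)` to the range of `L_τ` over the
finite-element space.  Product spaces carry the product (ℓ²) Hilbert
structure, realized via `WithLp 2`. -/
theorem fosls_energy_law_bound
    {V W Z : Type*} [NormedAddCommGroup V] [InnerProductSpace ℝ V] [CompleteSpace V]
    [NormedAddCommGroup W] [InnerProductSpace ℝ W] [CompleteSpace W]
    [NormedAddCommGroup Z] [InnerProductSpace ℝ Z] [CompleteSpace Z]
    (B : V →L[ℝ] W) (C : W →L[ℝ] Z) (τ : ℝ) (hτ : 0 < τ)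
    (Lτ : WithLp 2 (V × W) →L[ℝ] WithLp 2 (V × WithLp 2 (W × Z)))
    (hLτ : ∀ (u : V) (w : W),
      Lτ ((WithLp.equiv 2 (V × W)).symm (u, w)) =
        (WithLp.equiv 2 (V × WithLp 2 (W × Z))).symm
          (ContinuousLinearMap.adjoint B w + (2 / τ) • u,
            (WithLp.equiv 2 (W × Z)).symm (w - B u, C w)))
    (𝒱h : Submodule ℝ (WithLp 2 (V × W)))
    (unh un uh : V) (Vh : W)
    (hmem : (WithLp.equiv 2 (V × W)).symm (uh, Vh) ∈ 𝒱h)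
    (hFOSLS : ∀ φ ∈ 𝒱h,
      ⟪Lτ ((WithLp.equiv 2 (V × W)).symm (uh, Vh)) -
          (WithLp.equiv 2 (V × WithLp 2 (W × Z))).symm
            ((2 / τ) • unh, (WithLp.equiv 2 (W × Z)).symm (0, 0)),
        Lτ φ⟫ = 0)
    (uhalf : V) (Vhalf : W)
    (hexact : Lτ ((WithLp.equiv 2 (V × W)).symm (uhalf, Vhalf)) =
        (WithLp.equiv 2 (V × WithLp 2 (W × Z))).symm
          ((2 / τ) • un, (WithLp.equiv 2 (W × Z)).symm (0, 0)))
    (unp1 : V) (hnext : unp1 = (2 : ℝ) • uh - unh)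
    (E : ℝ) (hE : E = (‖unp1‖ ^ 2 - ‖unh‖ ^ 2) / (2 * τ) + ‖Vh‖ ^ 2) :
    (∀ φ ∈ 𝒱h,
      |E| ≤ (‖Lτ‖ * ‖(WithLp.equiv 2 (V × W)).symm (uh, Vh) -
                      (WithLp.equiv 2 (V × W)).symm (uhalf, Vhalf)‖ +
              (2 / τ) * ‖unh - un‖) *
            ‖(WithLp.equiv 2 (V × WithLp 2 (W × Z))).symm
                (uh, (WithLp.equiv 2 (W × Z)).symm (Vh, 0)) - Lτ φ‖) ∧
    |E| ≤ (‖Lτ‖ * ‖(WithLp.equiv 2 (V × W)).symm (uh, Vh) -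
                    (WithLp.equiv 2 (V × W)).symm (uhalf, Vhalf)‖ +
            (2 / τ) * ‖unh - un‖) *
          ⨅ φ : 𝒱h,
            ‖(WithLp.equiv 2 (V × WithLp 2 (W × Z))).symm
                (uh, (WithLp.equiv 2 (W × Z)).symm (Vh, 0)) - Lτ (φ : WithLp 2 (V × W))‖ :=
  fosls_energy_law_bound_general B C τ hτ Lτ hLτ 𝒱h unh un uh Vh hFOSLS uhalf Vhalf hexact unp1
    hnext E hE
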